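/- Let m ≥ k, and let M_k*(q) be any edge-colored tournament obtained from M_k(q) by replacing each pair of oppositely oriented color-0 edges by a single oriented edge carrying an arbitrary color in {1, …, k/2} (arbitrary orientation and color for each such pair), while keeping all other edges and their colors. If P_k(q) contains no monochromatic transitive subtournament of order m, then M_k*(q) contains no monochromatic transitive subtournament of order m+2. -/

import Mathlib

/-- `S_k = ⟨ω^k⟩`, the set of nonzero `k`-th power residues of `F`
(for `ω` a primitive element of the finite field `F`). -/
def Sk {F : Type} [Field F] (ω : F) (k : ℕ) : Set F :=
  {x | ∃ n : ℕ, x = ω ^ (k * n)}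

/-- `S_{k,0} = {0}` and `S_{k,i} = ω^(i-1) • S_k` for `i ≥ 1`. -/
def Ski {F : Type} [Field F] (ω : F) (k : ℕ) : ℕ → Set F
  | 0 => {0}
  | (i + 1) => {x | ∃ n : ℕ, x = ω ^ i * ω ^ (k * n)}

/-- The vertex set of the Mathon-type digraph `M_k(q)`: equivalence classes of
`X = (F × F) \ {(0,0)}` under `(a,b) ~ (ag,bg)` for `g ∈ S_k`. -/
def Vtx (F : Type) [Field F] (ω : F) (k : ℕ) : Type :=
  Quot (fun p q : {p : F × F // p ≠ (0, 0)} =>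
    ∃ g ∈ Sk ω k, q.1 = (p.1.1 * g, p.1.2 * g))

/-- The equivalence class `[a, b]` of a nonzero pair `(a, b)`. -/
def vmk {F : Type} [Field F] (ω : F) (k : ℕ) (p : {p : F × F // p ≠ (0, 0)}) :
    Vtx F ω k :=
  Quot.mk _ p

/-- `[a,b] → [c,d]` is an edge of color `i` in `M_k(q)` iff `bc - ad ∈ S_{k,i}`
(well-defined since `g S_{k,i} = S_{k,i}` for `g ∈ S_k`). -/
def Edge {F : Type} [Field F] (ω : F) (k : ℕ) (u v : Vtx F ω k) (i : ℕ) : Prop :=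
  ∃ p q : {p : F × F // p ≠ (0, 0)},
    u = vmk ω k p ∧ v = vmk ω k q ∧
      p.1.2 * q.1.1 - p.1.1 * q.1.2 ∈ Ski ω k i


/-!
Let `T` be a monochromatic transitive subtournament of `M_k*(q)` of color `c₀ + 1`, with source
`p`. Two vertices `[a, b]`, `[c, d]` with `bc - ad ≠ 0` are joined by an original edge of
`M_k(q)`; since `-1` lies in the cyclotomic class `k/2`, inside `T` the edge points from `[a, b]`
to `[c, d]` exactly when `bc - ad` lies in class `c₀`. Besides `p`, at most one vertex of `T`,
namely `[-p]`, lies on the line `F • p`, so `T` contains `m` vertices `w` with `det (p, w)` in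
class `c₀`. Projecting from `p` sends them to points of `F` whose differences are their pairwise
determinants times `k`-th powers, hence onto a monochromatic transitive subtournament of `P_k(q)`
of order `m`.
-/

section CyclotomicClass

variable {F : Type} [Field F] {ω : F} {k : ℕ} {i j : ZMod k} {x y : F}

/-- `x ∈ ω ^ j • S_k`; in this notation `Ski ω k (i + 1)` is the class of index `i`. -/
def InCyclotomicClass (ω : F) (k : ℕ) (j : ZMod k) (x : F) : Prop :=
  ∃ n : ℕ, x = ω ^ n ∧ (n : ZMod k) = j

theorem inCyclotomicClass_pow (ω : F) (k n : ℕ) : InCyclotomicClass ω k n (ω ^ n) :=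
  ⟨n, rfl, rfl⟩

theorem InCyclotomicClass.mul (hx : InCyclotomicClass ω k i x)
    (hy : InCyclotomicClass ω k j y) : InCyclotomicClass ω k (i + j) (x * y) := by
  obtain ⟨n, rfl, rfl⟩ := hx
  obtain ⟨n', rfl, rfl⟩ := hy
  exact ⟨n + n', (pow_add ..).symm, by push_cast; rfl⟩

theorem InCyclotomicClass.ne_zero (hω : IsOfFinOrder ω) (hx : InCyclotomicClass ω k j x) :
    x ≠ 0 := by
  obtain ⟨n, rfl, -⟩ := hx
  exact (hω.isUnit.pow n).ne_zero

theorem InCyclotomicClass.inv (hω : IsOfFinOrder ω) (hk : k ∣ orderOf ω)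
    (hx : InCyclotomicClass ω k j x) : InCyclotomicClass ω k (-j) x⁻¹ := by
  obtain ⟨n, rfl, rfl⟩ := hx
  have ho : 1 ≤ orderOf ω := orderOf_pos_iff.mpr hω
  refine ⟨n * (orderOf ω - 1), ?_, ?_⟩
  · refine inv_eq_of_mul_eq_one_right ?_
    rw [← pow_add, ← mul_one_add, Nat.add_sub_cancel' ho, pow_mul', pow_orderOf_eq_one, one_pow]
  · rw [Nat.cast_mul, Nat.cast_sub ho, (ZMod.natCast_eq_zero_iff _ _).mpr hk]
    ring

theorem InCyclotomicClass.div (hω : IsOfFinOrder ω) (hk : k ∣ orderOf ω)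
    (hx : InCyclotomicClass ω k i x) (hy : InCyclotomicClass ω k j y) :
    InCyclotomicClass ω k (i - j) (x / y) := by
  simpa [sub_eq_add_neg, div_eq_mul_inv] using hx.mul (hy.inv hω hk)

theorem InCyclotomicClass.neg (hx : InCyclotomicClass ω k j x)
    (hneg : InCyclotomicClass ω k (k / 2 : ℕ) (-1)) :
    InCyclotomicClass ω k (j + (k / 2 : ℕ)) (-x) := by
  simpa using hx.mul hneg

theorem mem_Ski_succ_iff (hω : IsOfFinOrder ω) (hk : k ∣ orderOf ω) (i : ℕ) :
    x ∈ Ski ω k (i + 1) ↔ InCyclotomicClass ω k i x := by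
  constructor
  · rintro ⟨n, rfl⟩
    exact ⟨i + k * n, (pow_add ..).symm, by simp⟩
  · rintro ⟨n, rfl, hn⟩
    -- shift the exponent by a multiple of `orderOf ω` to make it at least `i`
    have hle : i ≤ n + orderOf ω * i :=
      le_add_left (Nat.le_mul_of_pos_left i (orderOf_pos_iff.mpr hω))
    have hmod : i ≡ n + orderOf ω * i [MOD k] := by
      rw [← ZMod.natCast_eq_natCast_iff]
      push_cast
      rw [hn, (ZMod.natCast_eq_zero_iff _ _).mpr hk]
      ring
    obtain ⟨t, ht⟩ := (Nat.modEq_iff_dvd' hle).mp hmod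
    refine ⟨t, ?_⟩
    rw [← pow_add, ← ht, Nat.add_sub_cancel' hle, pow_add, pow_mul, pow_orderOf_eq_one, one_pow,
      mul_one]

theorem mem_Sk_iff (hω : IsOfFinOrder ω) (hk : k ∣ orderOf ω) :
    x ∈ Sk ω k ↔ InCyclotomicClass ω k 0 x := by
  have h : x ∈ Sk ω k ↔ x ∈ Ski ω k (0 + 1) := by simp [Sk, Ski]
  simpa using h.trans (mem_Ski_succ_iff hω hk 0)

theorem InCyclotomicClass.mul_left_iff {θ : F} (hω : IsOfFinOrder ω) (hk : k ∣ orderOf ω)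
    (hθ : InCyclotomicClass ω k 0 θ) :
    InCyclotomicClass ω k j (θ * x) ↔ InCyclotomicClass ω k j x := by
  refine ⟨fun h => ?_, fun h => by simpa using hθ.mul h⟩
  simpa [mul_div_cancel_left₀ _ (hθ.ne_zero hω)] using h.div hω hk hθ

theorem neg_one_inCyclotomicClass {t : ℕ} (hω : IsOfFinOrder ω)
    (hke : Even k) (ht : orderOf ω = k * (2 * t + 1)) :
    InCyclotomicClass ω k (k / 2 : ℕ) (-1) := by
  obtain ⟨a, rfl⟩ := hke
  have hhalf : orderOf ω / 2 = (a + a) * t + a := by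
    rw [ht, show (a + a) * (2 * t + 1) = 2 * ((a + a) * t + a) by ring]
    exact Nat.mul_div_cancel_left _ two_pos
  refine ⟨(a + a) * t + a, ?_, by simp [show (a + a) / 2 = a by omega]⟩
  have h2 : 2 ∣ orderOf ω := ⟨(a + a) * t + a, by rw [ht]; ring⟩
  have ho := orderOf_pos_iff.mpr hω
  have hprim := (IsPrimitiveRoot.orderOf ω).pow_of_dvd
    (Nat.div_pos (Nat.le_of_dvd ho h2) two_pos).ne' (Nat.div_dvd_of_dvd h2)
  rw [Nat.div_div_self h2 ho.ne'] at hprim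
  rw [← hhalf, hprim.eq_neg_one_of_two_right]

end CyclotomicClass

theorem ZMod.natCast_half_add_natCast_half {k : ℕ} (hk : Even k) :
    ((k / 2 : ℕ) : ZMod k) + ((k / 2 : ℕ) : ZMod k) = 0 := by
  rw [← Nat.cast_add, ← two_mul, Nat.two_mul_div_two_of_even hk, ZMod.natCast_self]

section FiniteField

variable {F : Type} [Field F] [Fintype F] {ω : F}

theorem ne_zero_of_forall_eq_pow (hq : 2 < Fintype.card F)
    (hω : ∀ x : F, x ≠ 0 → ∃ n : ℕ, x = ω ^ n) : ω ≠ 0 := by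
  classical
  rintro rfl
  have hsub : (Finset.univ : Finset F) ⊆ {0, 1} := by
    intro x _
    by_cases hx : x = 0
    · simp [hx]
    · obtain ⟨n, rfl⟩ := hω x hx
      rcases n with _ | n <;> simp
  have := (Finset.card_le_card hsub).trans Finset.card_le_two
  rw [Finset.card_univ] at this
  omega

theorem orderOf_eq_card_sub_one (hω : ∀ x : F, x ≠ 0 → ∃ n : ℕ, x = ω ^ n) (hω0 : ω ≠ 0) :
    orderOf ω = Fintype.card F - 1 := by
  classical
  have hgen : ∀ v : Fˣ, v ∈ Subgroup.zpowers (Units.mk0 ω hω0) := by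
    intro v
    obtain ⟨n, hn⟩ := hω v v.ne_zero
    exact ⟨n, Units.ext (by simp [hn])⟩
  rw [← Units.val_mk0 hω0, orderOf_units, orderOf_eq_card_of_forall_mem_zpowers hgen,
    Nat.card_eq_fintype_card, Fintype.card_units]

theorem exists_orderOf_eq_mul_odd {k : ℕ} (hk : 2 ≤ k) (hq : Fintype.card F % (2 * k) = k + 1)
    (hω : ∀ x : F, x ≠ 0 → ∃ n : ℕ, x = ω ^ n) : ∃ t, orderOf ω = k * (2 * t + 1) := by
  have hω0 := ne_zero_of_forall_eq_pow (by have := Nat.mod_le (Fintype.card F) (2 * k); omega) hω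
  have h := Nat.div_add_mod (Fintype.card F) (2 * k)
  rw [hq] at h
  exact ⟨Fintype.card F / (2 * k), by
    rw [orderOf_eq_card_sub_one hω hω0]; exact Nat.sub_eq_of_eq_add (by linarith)⟩

end FiniteField

section Tournament

variable {V α : Type*} {r : V → V → Prop} {ψ : V → α} {S : Set V}

theorem exists_forall_rel_of_transitive {T : Set V}
    (hT : T.Finite) (hne : T.Nonempty) (hirr : ∀ v, ¬ r v v)
    (htour : ∀ u v, u ≠ v → (r u v ↔ ¬ r v u))
    (htrans : ∀ a ∈ T, ∀ b ∈ T, ∀ d ∈ T, r a b → r b d → r a d) :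
    ∃ p ∈ T, ∀ w ∈ T, w ≠ p → r p w := by
  have := hT.to_subtype
  let R : T → T → Prop := fun a b => r a b
  have : IsTrans T R := ⟨fun a b d => htrans a a.2 b b.2 d d.2⟩
  have : Std.Irrefl R := ⟨fun a => hirr a⟩
  obtain ⟨p, -, hp⟩ := (Finite.wellFounded_of_trans_of_irrefl R).has_min Set.univ
    ⟨⟨_, hne.some_mem⟩, trivial⟩
  exact ⟨p, p.2, fun w hw hwp => (htour p w (Ne.symm hwp)).mpr fun h => hp ⟨w, hw⟩ trivial h⟩

theorem injOn_of_rel_iff (R : α → α → Prop) (hR : ∀ a, ¬ R a a)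
    (htour : ∀ u v, u ≠ v → (r u v ↔ ¬ r v u))
    (hψ : ∀ w ∈ S, ∀ w' ∈ S, w ≠ w' → (R (ψ w) (ψ w') ↔ r w w')) : Set.InjOn ψ S := by
  intro w hw w' hw' h
  by_contra hne
  by_cases hr : r w w'
  · exact hR (ψ w') (by simpa [h] using (hψ w hw w' hw' hne).mpr hr)
  · have hr' : r w' w := by_contra fun h' => hr ((htour w w' hne).mpr h')
    exact hR (ψ w') (by simpa [h] using (hψ w' hw' w hw (Ne.symm hne)).mpr hr')

theorem image_total_and_transitive (R : α → α → Prop) (hR : ∀ a, ¬ R a a)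
    (htour : ∀ u v, u ≠ v → (r u v ↔ ¬ r v u))
    (htrans : ∀ a ∈ S, ∀ b ∈ S, ∀ d ∈ S, r a b → r b d → r a d)
    (hψ : ∀ w ∈ S, ∀ w' ∈ S, w ≠ w' → (R (ψ w) (ψ w') ↔ r w w')) :
    (∀ a ∈ ψ '' S, ∀ b ∈ ψ '' S, a ≠ b → R a b ∨ R b a) ∧
      ∀ a ∈ ψ '' S, ∀ b ∈ ψ '' S, ∀ d ∈ ψ '' S, R a b → R b d → R a d := by
  have hne : ∀ a b, R (ψ a) (ψ b) → a ≠ b := by rintro a b h rfl; exact hR _ h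
  refine ⟨?_, ?_⟩
  · rintro _ ⟨w, hw, rfl⟩ _ ⟨w', hw', rfl⟩ hww'
    have hne' : w ≠ w' := by rintro rfl; exact hww' rfl
    by_cases hr : r w w'
    · exact .inl ((hψ w hw w' hw' hne').mpr hr)
    · exact .inr ((hψ w' hw' w hw hne'.symm).mpr (by_contra fun h => hr ((htour w w' hne').mpr h)))
  · rintro _ ⟨a, ha, rfl⟩ _ ⟨b, hb, rfl⟩ _ ⟨d, hd, rfl⟩ hab hbd
    have hrab := (hψ a ha b hb (hne a b hab)).mp hab
    have hrbd := (hψ b hb d hd (hne b d hbd)).mp hbd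
    have had : a ≠ d := by
      rintro rfl
      exact (htour a b (hne a b hab)).mp hrab hrbd
    exact (hψ a ha d hd had).mpr (htrans a ha b hb d hd hrab hrbd)

end Tournament

section Det2

variable {F : Type} [Field F]

def det2 (P Q : F × F) : F :=
  P.2 * Q.1 - P.1 * Q.2

theorem det2_self (P : F × F) : det2 P P = 0 := by
  unfold det2; ring

theorem det2_swap (P Q : F × F) : det2 Q P = -det2 P Q := by
  unfold det2; ring

theorem det2_smul_left (l : F) (P Q : F × F) : det2 (l • P) Q = l * det2 P Q := by
  simp only [det2, Prod.smul_fst, Prod.smul_snd, smul_eq_mul]; ring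

theorem det2_smul_right (l : F) (P Q : F × F) : det2 P (l • Q) = l * det2 P Q := by
  simp only [det2, Prod.smul_fst, Prod.smul_snd, smul_eq_mul]; ring

theorem exists_smul_eq_of_det2_eq_zero {P Q : F × F} (hP : P ≠ 0) (hQ : Q ≠ 0)
    (h : det2 P Q = 0) : ∃ l : F, l ≠ 0 ∧ Q = l • P := by
  have hl : ∃ l : F, Q = l • P := by
    unfold det2 at h
    by_cases h1 : P.1 = 0
    · have h2 : P.2 ≠ 0 := fun h2 => hP (Prod.ext h1 h2)
      have hQ1 : Q.1 = 0 := by simpa [h1, h2] using h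
      refine ⟨Q.2 / P.2, Prod.ext ?_ ?_⟩ <;> simp only [Prod.smul_fst, Prod.smul_snd, smul_eq_mul]
      · simp [h1, hQ1]
      · field_simp
    · refine ⟨Q.1 / P.1, Prod.ext ?_ ?_⟩ <;> simp only [Prod.smul_fst, Prod.smul_snd, smul_eq_mul]
      · field_simp
      · field_simp
        linear_combination -h
  obtain ⟨l, rfl⟩ := hl
  exact ⟨l, by rintro rfl; simp at hQ, rfl⟩

theorem exists_det2_ne_zero {P : F × F} (hP : P ≠ 0) : ∃ R : F × F, det2 P R ≠ 0 := by
  by_cases h1 : P.1 = 0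
  · exact ⟨(1, 0), by simpa [det2] using fun h2 => hP (Prod.ext h1 h2)⟩
  · exact ⟨(0, 1), by simpa [det2] using h1⟩

theorem exists_sub_eq_det2_div {P : F × F} (hP : P ≠ 0) :
    ∃ ψ : F × F → F, ∀ Q Q', det2 P Q ≠ 0 → det2 P Q' ≠ 0 →
      ψ Q' - ψ Q = det2 Q Q' / (det2 P Q * det2 P Q') := by
  obtain ⟨R, hR⟩ := exists_det2_ne_zero hP
  refine ⟨fun Q => det2 R Q / (det2 P R * det2 P Q), fun Q Q' hQ hQ' => ?_⟩
  rw [div_sub_div _ _ (mul_ne_zero hR hQ') (mul_ne_zero hR hQ),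
    div_eq_div_iff (mul_ne_zero (mul_ne_zero hR hQ') (mul_ne_zero hR hQ)) (mul_ne_zero hQ hQ')]
  -- the Plücker relation among `P`, `R`, `Q`, `Q'`
  unfold det2
  ring

end Det2

namespace Vtx

variable {F : Type} [Field F] {ω : F} {k : ℕ}

noncomputable def rep (v : Vtx F ω k) : {p : F × F // p ≠ (0, 0)} :=
  Quot.out v

theorem vmk_rep (v : Vtx F ω k) : vmk ω k v.rep = v :=
  Quot.out_eq v

/-- Depends on the chosen representatives, but only up to a factor in `S_k`. -/
noncomputable def det (u v : Vtx F ω k) : F :=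
  det2 u.rep.1 v.rep.1

theorem det_self (v : Vtx F ω k) : v.det v = 0 :=
  det2_self _

theorem det_swap (u v : Vtx F ω k) : v.det u = -u.det v :=
  det2_swap _ _

theorem edge_of_det_mem {u v : Vtx F ω k} {i : ℕ} (h : u.det v ∈ Ski ω k i) : Edge ω k u v i :=
  ⟨u.rep, v.rep, (vmk_rep u).symm, (vmk_rep v).symm, h⟩

theorem vmk_eq_vmk_of_eq_smul (hω : IsOfFinOrder ω) (hk : k ∣ orderOf ω)
    {P Q : {p : F × F // p ≠ (0, 0)}} {l : F} (hl : InCyclotomicClass ω k 0 l)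
    (h : Q.1 = l • P.1) : vmk ω k Q = vmk ω k P :=
  (Quot.sound ⟨l, (mem_Sk_iff hω hk).mpr hl, by rw [h]; ext <;> simp [mul_comm]⟩).symm

theorem eq_of_rep_eq_smul (hω : IsOfFinOrder ω) (hk : k ∣ orderOf ω) {v w : Vtx F ω k}
    {l : F} (hl : InCyclotomicClass ω k 0 l) (h : w.rep.1 = l • v.rep.1) : w = v := by
  rw [← vmk_rep w, ← vmk_rep v, vmk_eq_vmk_of_eq_smul hω hk hl h]

theorem exists_rep_eq_smul_of_det_eq_zero {v w : Vtx F ω k} (h : v.det w = 0) :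
    ∃ l : F, l ≠ 0 ∧ w.rep.1 = l • v.rep.1 :=
  exists_smul_eq_of_det2_eq_zero v.rep.2 w.rep.2 h

/-- The vertices on the line through `p` are the classes of `ω ^ j • p`, `j : ZMod k`. -/
theorem ncard_le_of_forall_det_eq_zero [NeZero k] (hω : ∀ x : F, x ≠ 0 → ∃ n : ℕ, x = ω ^ n)
    (hωo : IsOfFinOrder ω) (hk : k ∣ orderOf ω) (p : Vtx F ω k) {T : Set (Vtx F ω k)}
    (hT : ∀ w ∈ T, p.det w = 0) : T.ncard ≤ k := by
  have hne : ∀ j : ZMod k, ω ^ j.val • p.rep.1 ≠ (0, 0) := fun j =>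
    smul_ne_zero (hωo.isUnit.pow _).ne_zero p.rep.2
  let G : ZMod k → Vtx F ω k := fun j => vmk ω k ⟨_, hne j⟩
  have hsub : T ⊆ Set.range G := by
    intro w hw
    obtain ⟨l, hl0, hl⟩ := exists_rep_eq_smul_of_det_eq_zero (hT w hw)
    obtain ⟨n, rfl⟩ := hω l hl0
    refine ⟨n, ?_⟩
    have hratio : InCyclotomicClass ω k 0 (ω ^ n / ω ^ (n : ZMod k).val) := by
      have := (inCyclotomicClass_pow ω k n).div hωo hk (inCyclotomicClass_pow ω k (n : ZMod k).val)
      rwa [ZMod.natCast_zmod_val, sub_self] at this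
    refine (vmk_eq_vmk_of_eq_smul hωo hk hratio ?_).symm.trans (vmk_rep w)
    rw [hl, smul_smul, div_mul_cancel₀ _ (hωo.isUnit.pow _).ne_zero]
  calc T.ncard ≤ (Set.range G).ncard := Set.ncard_le_ncard hsub (Set.finite_range G)
    _ ≤ (Set.univ : Set (ZMod k)).ncard := by rw [← Set.image_univ]; exact Set.ncard_image_le
    _ = k := by rw [Set.ncard_univ, Nat.card_zmod]

theorem eq_of_det_eq_zero (hωo : IsOfFinOrder ω) (hk : k ∣ orderOf ω) {p w w' : Vtx F ω k}
    {j : ZMod k} (hw : InCyclotomicClass ω k j (p.det w))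
    (hw' : InCyclotomicClass ω k j (p.det w')) (h : w.det w' = 0) : w' = w := by
  obtain ⟨l, -, hl⟩ := exists_rep_eq_smul_of_det_eq_zero h
  have hdet : p.det w' = l * p.det w := by rw [det, hl, det2_smul_right]; rfl
  refine eq_of_rep_eq_smul hωo hk ?_ hl
  simpa [hdet, mul_div_cancel_right₀ _ (hw.ne_zero hωo)] using hw'.div hωo hk hw

end Vtx

section Mathon

variable {F : Type} [Field F] {ω : F} {k : ℕ} {r : Vtx F ω k → Vtx F ω k → Prop}
  {c : Vtx F ω k → Vtx F ω k → ℕ} {u v : Vtx F ω k} {c0 : ℕ}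

def KeepsEdges (r : Vtx F ω k → Vtx F ω k → Prop) (c : Vtx F ω k → Vtx F ω k → ℕ) : Prop :=
  ∀ u v : Vtx F ω k, ∀ i : ℕ, 1 ≤ i → i ≤ k / 2 → Edge ω k u v i → r u v ∧ c u v = i

theorem rel_of_inCyclotomicClass_det (hω : IsOfFinOrder ω) (hk : k ∣ orderOf ω)
    (hkeep : KeepsEdges r c)
    (hc0 : c0 < k / 2) (h : InCyclotomicClass ω k c0 (u.det v)) : r u v ∧ c u v = c0 + 1 :=
  hkeep u v (c0 + 1) (by omega) (by omega)
    (Vtx.edge_of_det_mem ((mem_Ski_succ_iff hω hk c0).mpr h))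

/-- An edge with `det ≠ 0` is an edge of `M_k(q)`; a class `≥ k/2` would give the reverse edge,
since `-1` lies in class `k/2`. -/
theorem inCyclotomicClass_det_of_rel (hω : ∀ x : F, x ≠ 0 → ∃ n : ℕ, x = ω ^ n)
    (hωo : IsOfFinOrder ω) (hk : k ∣ orderOf ω) (hke : Even k)
    (hneg : InCyclotomicClass ω k (k / 2 : ℕ) (-1))
    (hkeep : KeepsEdges r c)
    (htour : ∀ u v : Vtx F ω k, u ≠ v → (r u v ↔ ¬ r v u))
    (huv : r u v) (hc : c u v = c0 + 1) (hdet : u.det v ≠ 0) :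
    InCyclotomicClass ω k c0 (u.det v) := by
  have hk0 : 0 < k := Nat.pos_of_dvd_of_pos hk (orderOf_pos_iff.mpr hωo)
  obtain ⟨n, hn⟩ := hω _ hdet
  have hs : InCyclotomicClass ω k (n % k : ℕ) (u.det v) := ⟨n, hn, (ZMod.natCast_mod n k).symm⟩
  have hne : u ≠ v := by rintro rfl; exact hdet (Vtx.det_self u)
  have hlt : n % k < k := Nat.mod_lt n hk0
  have hhalf : 2 * (k / 2) = k := Nat.two_mul_div_two_of_even hke
  by_cases hsmall : n % k < k / 2
  · have := (rel_of_inCyclotomicClass_det hωo hk hkeep hsmall hs).2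
    rwa [show c0 = n % k by omega]
  · have hvu : InCyclotomicClass ω k (n % k - k / 2 : ℕ) (v.det u) := by
      rw [Vtx.det_swap]
      convert hs.neg hneg using 1
      rw [Nat.cast_sub (by omega), sub_eq_add_neg,
        neg_eq_of_add_eq_zero_left (ZMod.natCast_half_add_natCast_half hke)]
    exact absurd (rel_of_inCyclotomicClass_det hωo hk hkeep (by omega) hvu).1
      ((htour u v hne).mp huv)

theorem inCyclotomicClass_det_or (hω : ∀ x : F, x ≠ 0 → ∃ n : ℕ, x = ω ^ n)
    (hωo : IsOfFinOrder ω) (hk : k ∣ orderOf ω) (hke : Even k)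
    (hneg : InCyclotomicClass ω k (k / 2 : ℕ) (-1))
    (hkeep : KeepsEdges r c)
    (htour : ∀ u v : Vtx F ω k, u ≠ v → (r u v ↔ ¬ r v u))
    (huv : r u v → c u v = c0 + 1) (hvu : r v u → c v u = c0 + 1) (hdet : u.det v ≠ 0) :
    InCyclotomicClass ω k c0 (u.det v) ∨ InCyclotomicClass ω k (c0 + (k / 2 : ℕ)) (u.det v) := by
  have hne : u ≠ v := by rintro rfl; exact hdet (Vtx.det_self u)
  by_cases h : r u v
  · exact .inl (inCyclotomicClass_det_of_rel hω hωo hk hke hneg hkeep htour h (huv h) hdet)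
  · have h' : r v u := by_contra fun h' => h ((htour u v hne).mpr h')
    have := inCyclotomicClass_det_of_rel hω hωo hk hke hneg hkeep htour h' (hvu h')
      (by rwa [Vtx.det_swap, neg_ne_zero])
    rw [Vtx.det_swap] at this
    exact .inr (by simpa using this.neg hneg)

/-- A vertex `w ≠ p` on a line through `p` is `[l • p]` with `l` outside `S_k`; if its edges to `y`
have the color of `p → y`, then `l` lies in the class `k/2` of `-1`, so `w = [-p]`. -/
theorem eq_vmk_neg_of_det_eq_zero (hωo : IsOfFinOrder ω) (hk : k ∣ orderOf ω) (hke : Even k)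
    (hneg : InCyclotomicClass ω k (k / 2 : ℕ) (-1)) {p y w : Vtx F ω k}
    (hpy : InCyclotomicClass ω k c0 (p.det y))
    (hwy : w.det y ≠ 0 →
      InCyclotomicClass ω k c0 (w.det y) ∨ InCyclotomicClass ω k (c0 + (k / 2 : ℕ)) (w.det y))
    (hpw : p.det w = 0) (hwp : w ≠ p) :
    w = vmk ω k ⟨-p.rep.1, neg_ne_zero.mpr p.rep.2⟩ := by
  obtain ⟨l, hl0, hl⟩ := Vtx.exists_rep_eq_smul_of_det_eq_zero hpw
  have hdet : w.det y = l * p.det y := by rw [Vtx.det, hl, det2_smul_left]; rfl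
  have hpy0 := hpy.ne_zero hωo
  have hratio : w.det y / p.det y = l := by rw [hdet, mul_div_cancel_right₀ _ hpy0]
  rcases hwy (by rw [hdet]; exact mul_ne_zero hl0 hpy0) with h | h
  · refine absurd (Vtx.eq_of_rep_eq_smul hωo hk ?_ hl) hwp
    simpa [hratio] using h.div hωo hk hpy
  · have hl' : InCyclotomicClass ω k (k / 2 : ℕ) l := by simpa [hratio] using h.div hωo hk hpy
    have hnl : InCyclotomicClass ω k 0 (-l) := by
      simpa [ZMod.natCast_half_add_natCast_half hke] using hl'.neg hneg
    rw [← Vtx.vmk_rep w]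
    exact Vtx.vmk_eq_vmk_of_eq_smul hωo hk hnl (by rw [hl]; simp)

theorem exists_sub_eq_mul_det [NeZero k] (hωo : IsOfFinOrder ω) (hk : k ∣ orderOf ω)
    (p : Vtx F ω k) (j : ZMod k) :
    ∃ ψ : Vtx F ω k → F, ∀ w w', InCyclotomicClass ω k j (p.det w) →
      InCyclotomicClass ω k j (p.det w') →
        ∃ θ, InCyclotomicClass ω k 0 θ ∧ ψ w' - ψ w = θ * w.det w' := by
  obtain ⟨ψ, hψ⟩ := exists_sub_eq_det2_div p.rep.2
  refine ⟨fun w => ω ^ (2 * j.val) * ψ w.rep.1, fun w w' hw hw' =>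
    ⟨ω ^ (2 * j.val) / (p.det w * p.det w'), ?_, ?_⟩⟩
  · convert (inCyclotomicClass_pow ω k (2 * j.val)).div hωo hk (hw.mul hw') using 1
    push_cast
    rw [ZMod.natCast_zmod_val]
    ring
  · rw [← mul_sub, hψ _ _ (hw.ne_zero hωo) (hw'.ne_zero hωo)]
    unfold Vtx.det
    ring

theorem exists_subset_inCyclotomicClass_det (hω : ∀ x : F, x ≠ 0 → ∃ n : ℕ, x = ω ^ n)
    (hωo : IsOfFinOrder ω) (hk : k ∣ orderOf ω) (hke : Even k)
    (hneg : InCyclotomicClass ω k (k / 2 : ℕ) (-1))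
    (hkeep : KeepsEdges r c)
    (htour : ∀ u v : Vtx F ω k, u ≠ v → (r u v ↔ ¬ r v u)) {T : Set (Vtx F ω k)} {m : ℕ}
    (hT : T.ncard = m + 2) (hmono : ∀ a ∈ T, ∀ b ∈ T, r a b → c a b = c0 + 1)
    {p y : Vtx F ω k} (hpT : p ∈ T) (hp : ∀ w ∈ T, w ≠ p → r p w) (hyT : y ∈ T)
    (hy : p.det y ≠ 0) :
    ∃ S ⊆ T, S.ncard = m ∧ ∀ w ∈ S, InCyclotomicClass ω k c0 (p.det w) := by
  have hclass : ∀ w ∈ T, w ≠ p → p.det w ≠ 0 → InCyclotomicClass ω k c0 (p.det w) :=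
    fun w hw hwp => inCyclotomicClass_det_of_rel hω hωo hk hke hneg hkeep htour (hp w hw hwp)
      (hmono p hpT w hw (hp w hw hwp))
  set w₀ := vmk ω k ⟨-p.rep.1, neg_ne_zero.mpr p.rep.2⟩
  have hbad : ∀ w ∈ T, w ≠ p → p.det w = 0 → w = w₀ := fun w hw hwp hpw =>
    eq_vmk_neg_of_det_eq_zero hωo hk hke hneg
      (hclass y hyT (by rintro rfl; exact hy (Vtx.det_self _)) hy)
      (inCyclotomicClass_det_or hω hωo hk hke hneg hkeep htour (hmono w hw y hyT)
        (hmono y hyT w hw)) hpw hwp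
  have hm : m ≤ (T \ {p, w₀}).ncard := by
    have := Set.le_ncard_sdiff {p, w₀} T
    have := Set.ncard_insert_le p {w₀}
    rw [Set.ncard_singleton] at this
    omega
  obtain ⟨S, hS, hcard⟩ := Set.exists_subset_card_eq hm
  refine ⟨S, hS.trans Set.sdiff_subset, hcard, fun w hw => ?_⟩
  obtain ⟨hwT, hw'⟩ := hS hw
  simp only [Set.mem_insert_iff, Set.mem_singleton_iff, not_or] at hw'
  exact hclass w hwT hw'.1 fun h => hw'.2 (hbad w hwT hw'.1 h)

theorem exists_paley_of_forall_inCyclotomicClass_det [NeZero k]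
    (hω : ∀ x : F, x ≠ 0 → ∃ n : ℕ, x = ω ^ n)
    (hωo : IsOfFinOrder ω) (hk : k ∣ orderOf ω) (hke : Even k)
    (hneg : InCyclotomicClass ω k (k / 2 : ℕ) (-1))
    (hkeep : KeepsEdges r c)
    (htour : ∀ u v : Vtx F ω k, u ≠ v → (r u v ↔ ¬ r v u)) (hc0 : c0 < k / 2)
    {S : Set (Vtx F ω k)} (hmono : ∀ a ∈ S, ∀ b ∈ S, r a b → c a b = c0 + 1)
    (htrans : ∀ a ∈ S, ∀ b ∈ S, ∀ d ∈ S, r a b → r b d → r a d)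
    {p : Vtx F ω k} (hS : ∀ w ∈ S, InCyclotomicClass ω k c0 (p.det w)) :
    ∃ P : Set F, P.ncard = S.ncard ∧
      (∀ a ∈ P, ∀ b ∈ P, a ≠ b → (b - a ∈ Ski ω k (c0 + 1) ∨ a - b ∈ Ski ω k (c0 + 1))) ∧
      (∀ a ∈ P, ∀ b ∈ P, ∀ d ∈ P,
        b - a ∈ Ski ω k (c0 + 1) → d - b ∈ Ski ω k (c0 + 1) → d - a ∈ Ski ω k (c0 + 1)) := by
  obtain ⟨ψ, hψ⟩ := exists_sub_eq_mul_det hωo hk p c0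
  have hiff : ∀ w ∈ S, ∀ w' ∈ S, w ≠ w' → (ψ w' - ψ w ∈ Ski ω k (c0 + 1) ↔ r w w') := by
    intro w hw w' hw' hne
    obtain ⟨θ, hθ, heq⟩ := hψ w w' (hS w hw) (hS w' hw')
    have hdet : w.det w' ≠ 0 := fun h =>
      hne (Vtx.eq_of_det_eq_zero hωo hk (hS w hw) (hS w' hw') h).symm
    rw [heq, mem_Ski_succ_iff hωo hk, hθ.mul_left_iff hωo hk]
    exact ⟨fun h => (rel_of_inCyclotomicClass_det hωo hk hkeep hc0 h).1, fun h =>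
      inCyclotomicClass_det_of_rel hω hωo hk hke hneg hkeep htour h (hmono w hw w' hw' h) hdet⟩
  have hR : ∀ a : F, a - a ∉ Ski ω k (c0 + 1) := fun a h =>
    ((mem_Ski_succ_iff hωo hk c0).mp h).ne_zero hωo (sub_self a)
  let R : F → F → Prop := fun a b => b - a ∈ Ski ω k (c0 + 1)
  exact ⟨ψ '' S, (injOn_of_rel_iff R hR htour hiff).ncard_image,
    image_total_and_transitive R hR htour htrans hiff⟩

end Mathon

/-- Theorem (Mathon-type construction): let `m ≥ k`, and let `M_k*(q)` be any
edge-colored tournament `(r, c)` on the vertex set of `M_k(q)` obtained by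
keeping every single oriented edge of color `1 ≤ i ≤ k/2` with its color, and
replacing each pair of oppositely oriented color-0 edges by a single oriented
edge of arbitrary orientation and arbitrary color in `{1, …, k/2}`.  If the
multicolor `k`-th power Paley tournament `P_k(q)` has no monochromatic
transitive subtournament of order `m`, then `M_k*(q)` has no monochromatic
transitive subtournament of order `m + 2`. -/
theorem stmt_18 (k : ℕ) (hk2 : 2 ≤ k) (hke : Even k)
    (F : Type) [Field F] [Fintype F]
    (hq : Fintype.card F % (2 * k) = k + 1)
    (ω : F) (hω : ∀ x : F, x ≠ 0 → ∃ n : ℕ, x = ω ^ n)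
    (m : ℕ) (hm : k ≤ m)
    -- `M_k*(q)`: a tournament `r` on the vertices of `M_k(q)`, with edge
    -- coloring `c`,
    (r : Vtx F ω k → Vtx F ω k → Prop)
    (c : Vtx F ω k → Vtx F ω k → ℕ)
    (hirr : ∀ v, ¬ r v v)
    (htour : ∀ u v : Vtx F ω k, u ≠ v → (r u v ↔ ¬ r v u))
    -- which keeps every single oriented edge of `M_k(q)` of color
    -- `1 ≤ i ≤ k/2` together with its color,
    (hkeep : ∀ u v : Vtx F ω k, ∀ i : ℕ, 1 ≤ i → i ≤ k / 2 →
      Edge ω k u v i → r u v ∧ c u v = i)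
    -- and colors every edge (in particular each edge replacing a pair of
    -- oppositely oriented color-0 edges) in `{1, …, k/2}`:
    (hcol : ∀ u v : Vtx F ω k, r u v → 1 ≤ c u v ∧ c u v ≤ k / 2)
    -- `P_k(q)` has no monochromatic transitive subtournament of order `m`:
    (hPaley : ¬ ∃ i : ℕ, 1 ≤ i ∧ i ≤ k / 2 ∧
      ∃ T : Set F, T.ncard = m ∧
        (∀ a ∈ T, ∀ b ∈ T, a ≠ b →
          (b - a ∈ Ski ω k i ∨ a - b ∈ Ski ω k i)) ∧
        (∀ a ∈ T, ∀ b ∈ T, ∀ d ∈ T,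
          b - a ∈ Ski ω k i → d - b ∈ Ski ω k i → d - a ∈ Ski ω k i)) :
    -- then `M_k*(q)` has no monochromatic transitive subtournament of
    -- order `m + 2`:
    ¬ ∃ (col : ℕ) (T : Set (Vtx F ω k)), T.ncard = m + 2 ∧
      (∀ a ∈ T, ∀ b ∈ T, r a b → c a b = col) ∧
      (∀ a ∈ T, ∀ b ∈ T, ∀ d ∈ T, r a b → r b d → r a d) := by
  rintro ⟨col, T, hTcard, hmono, htrans⟩
  obtain ⟨t, ht⟩ := exists_orderOf_eq_mul_odd hk2 hq hω
  have hωo : IsOfFinOrder ω := orderOf_pos_iff.mp (by rw [ht]; positivity)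
  have hk : k ∣ orderOf ω := ⟨_, ht⟩
  have hneg := neg_one_inCyclotomicClass hωo hke ht
  have : NeZero k := ⟨by omega⟩
  obtain ⟨p, hpT, hp⟩ := exists_forall_rel_of_transitive (Set.finite_of_ncard_pos (by omega))
    (Set.nonempty_of_ncard_ne_zero (by omega)) hirr htour htrans
  obtain ⟨y, hyT, hy⟩ : ∃ y ∈ T, p.det y ≠ 0 := by
    by_contra! h
    have := Vtx.ncard_le_of_forall_det_eq_zero hω hωo hk p h
    omega
  have hpy := hp y hyT (by rintro rfl; exact hy (Vtx.det_self _))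
  obtain ⟨c0, rfl, hc0⟩ : ∃ c0, col = c0 + 1 ∧ c0 < k / 2 := by
    have := hcol p y hpy
    rw [hmono p hpT y hyT hpy] at this
    exact ⟨col - 1, by omega, by omega⟩
  obtain ⟨S, hST, hS, hSdet⟩ := exists_subset_inCyclotomicClass_det hω hωo hk hke hneg hkeep htour
    hTcard hmono hpT hp hyT hy
  obtain ⟨P, hP, hPtotal, hPtrans⟩ := exists_paley_of_forall_inCyclotomicClass_det hω hωo hk hke
    hneg hkeep htour hc0 (fun a ha b hb => hmono a (hST ha) b (hST hb))
    (fun a ha b hb d hd => htrans a (hST ha) b (hST hb) d (hST hd)) hSdet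
  exact hPaley ⟨c0 + 1, by omega, by omega, P, hP.trans hS, hPtotal, hPtrans⟩
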